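/- arXiv:1501.04085 — 5 statements merged into one kernel-verified Lean document; each statement's English description precedes it below -/
import Mathlib

section
/- Let m ≥ n be positive integers and let B̃ be an m×n integer matrix of full rank n. Define the dominance order on ℤ^m by g' ≺ g iff g' = g + B̃v for some nonzero v ∈ ℕ^n. Then for any g¹ ≺ g⁰ in ℤ^m, there are only finitely many g² ∈ ℤ^m with g¹ ≺ g² ≺ g⁰. -/
/-- Finiteness of intervals in the dominance order determined by a full-rank
integer matrix `B` (columns linearly independent). -/
theorem stmt_0 (m n : ℕ) (hn : 0 < n) (hmn : n ≤ m)
    (B : Matrix (Fin m) (Fin n) ℤ)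
    (hrank : LinearIndependent ℤ (fun j : Fin n => fun i : Fin m => B i j))
    (prec : (Fin m → ℤ) → (Fin m → ℤ) → Prop)
    (hprec : ∀ g' g, prec g' g ↔
      ∃ v : Fin n → ℕ, v ≠ 0 ∧ g' = g + B.mulVec (fun j => (v j : ℤ)))
    (g1 g0 : Fin m → ℤ) (h : prec g1 g0) :
    {g2 : Fin m → ℤ | prec g1 g2 ∧ prec g2 g0}.Finite := by
  -- injectivity of mulVec
  have hinj : Function.Injective (B.mulVec : (Fin n → ℤ) → (Fin m → ℤ)) := by
    intro a b hab
    have key : ∀ x : Fin n → ℤ, B.mulVec x = ∑ j, x j • (fun i => B i j) := by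
      intro x
      funext i
      simp [Matrix.mulVec, dotProduct, Finset.sum_apply, mul_comm]
    have h0 : B.mulVec (a - b) = 0 := by
      have := Matrix.mulVec_sub B a b
      rw [this, hab, sub_self]
    rw [key] at h0
    have := (Fintype.linearIndependent_iff.mp hrank) (a - b) h0
    funext j
    have := this j
    have : a j - b j = 0 := by simpa using this
    linarith
  rcases (hprec g1 g0).mp h with ⟨w, hw0, hw⟩
  -- the candidate finite set
  have hfin : ({v : Fin n → ℕ | ∀ j, v j ≤ w j}).Finite := by
    have : {v : Fin n → ℕ | ∀ j, v j ≤ w j} ⊆ Set.pi Set.univ (fun j => Set.Iic (w j)) := by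
      intro v hv j _
      exact hv j
    exact (Set.Finite.pi (fun j => Set.finite_Iic (w j))).subset this
  apply ((hfin.image (fun v => g0 + B.mulVec (fun j => (v j : ℤ))))).subset
  rintro g2 ⟨h12, h20⟩
  rcases (hprec g1 g2).mp h12 with ⟨v1, _, hv1⟩
  rcases (hprec g2 g0).mp h20 with ⟨v2, _, hv2⟩
  have heq : B.mulVec (fun j => ((v1 j + v2 j : ℕ) : ℤ)) = B.mulVec (fun j => (w j : ℤ)) := by
    have : g0 + B.mulVec (fun j => ((v1 j + v2 j : ℕ) : ℤ)) = g0 + B.mulVec (fun j => (w j : ℤ)) := by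
      rw [← hw, hv1, hv2]
      have : B.mulVec (fun j => ((v1 j + v2 j : ℕ) : ℤ)) =
          B.mulVec (fun j => (v2 j : ℤ)) + B.mulVec (fun j => (v1 j : ℤ)) := by
        have harg : (fun j => ((v1 j + v2 j : ℕ) : ℤ)) =
            (fun j => (v2 j : ℤ)) + (fun j => (v1 j : ℤ)) := by
          funext j
          simp [Pi.add_apply]
          push_cast
          ring
        rw [harg, Matrix.mulVec_add]
      rw [this]
      abel
    exact add_left_cancel this
  have hvw : ∀ j, v1 j + v2 j = w j := by
    intro j
    have := congrFun (hinj heq) j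
    exact_mod_cast this
  refine ⟨v2, fun j => ?_, hv2.symm⟩
  rw [← hvw j]; omega
end

section
/- In the setting of a Laurent polynomial ring T = ℤ[q^{±1/2}][X_1^{±1},…,X_m^{±1}] with dominance order ≺ coming from a full-rank m×n integer matrix B̃, let L = {L(η) : η ∈ ℤ^m} be a family with L(η) pointed at η for every η. Suppose Z ∈ T is pointed at g and Z = Σ_η a_η L(η) is a finite ℤ[q^{±1/2}]-linear combination. Then a_g = 1 and a_η = 0 for every η with η ⋠ g (η neither equal to nor dominated by g). In particular, the expansion has the unitriangular form Z = L(g) + Σ_{η ≺ g} a_η L(η). -/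
lemma stmt7_exists_max {α : Type*} (r : α → α → Prop)
    (htr : ∀ a b c, r a b → r b c → r a c)
    (hirr : ∀ x, ¬ r x x) (s : Finset α) (hs : s.Nonempty) :
    ∃ x ∈ s, ∀ y ∈ s, ¬ r x y := by
  classical
  revert hs
  induction s using Finset.induction_on with
  | empty => intro hs; simp at hs
  | @insert a s ha ih =>
    intro _
    rcases s.eq_empty_or_nonempty with rfl | hsne
    · exact ⟨a, by simp, by simpa using hirr a⟩
    · obtain ⟨x, hxs, hxmax⟩ := ih hsne
      by_cases hxa : r x a
      · refine ⟨a, Finset.mem_insert_self _ _, ?_⟩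
        intro y hy hray
        rcases Finset.mem_insert.mp hy with rfl | hy
        · exact hirr _ hray
        · exact hxmax y hy (htr _ _ _ hxa hray)
      · refine ⟨x, Finset.mem_insert_of_mem hxs, ?_⟩
        intro y hy hrxy
        rcases Finset.mem_insert.mp hy with rfl | hy
        · exact hxa hrxy
        · exact hxmax y hy hrxy

/-- A finite expansion of a pointed element in a pointed family is
automatically unitriangular: the coefficient at the leading degree is `1`
and all other nonzero coefficients occur at dominated degrees.  The quantum
torus is modelled as `AddMonoidAlgebra R (Fin m → ℤ)` with
`R = AddMonoidAlgebra ℤ ℤ` the Laurent polynomials in `q^{1/2}`. -/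
theorem stmt_7 (m n : ℕ) (hn : 0 < n) (hmn : n ≤ m)
    (B : Matrix (Fin m) (Fin n) ℤ)
    (hrank : LinearIndependent ℤ (fun j : Fin n => fun i : Fin m => B i j))
    (prec : (Fin m → ℤ) → (Fin m → ℤ) → Prop)
    (hprec : ∀ g' g, prec g' g ↔
      ∃ v : Fin n → ℕ, v ≠ 0 ∧ g' = g + B.mulVec (fun j => (v j : ℤ)))
    (L : (Fin m → ℤ) → AddMonoidAlgebra (AddMonoidAlgebra ℤ ℤ) (Fin m → ℤ))
    (hL : ∀ η, (L η).coeff η = 1 ∧ ∀ h ∈ (L η).coeff.support, h = η ∨ prec h η)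
    (Z : AddMonoidAlgebra (AddMonoidAlgebra ℤ ℤ) (Fin m → ℤ)) (g : Fin m → ℤ)
    (hZ : Z.coeff g = 1 ∧ ∀ h ∈ Z.coeff.support, h = g ∨ prec h g)
    (a : (Fin m → ℤ) →₀ AddMonoidAlgebra ℤ ℤ)
    (hsum : Z = a.sum fun η c => c • L η) :
    a g = 1 ∧ ∀ η, η ≠ g → ¬ prec η g → a η = 0 := by
  classical
  -- mulVec of the cast of a nonzero ℕ-vector is nonzero
  have hker : ∀ v : Fin n → ℕ, B.mulVec (fun j => (v j : ℤ)) = 0 → v = 0 := by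
    intro v hv
    have h := Fintype.linearIndependent_iff.mp hrank (fun j => (v j : ℤ)) ?_
    · funext j
      exact_mod_cast h j
    · funext i
      have := congrFun hv i
      simpa [Matrix.mulVec, dotProduct, Finset.sum_apply, mul_comm] using this
  have hirr : ∀ x, ¬ prec x x := by
    intro x hx
    obtain ⟨v, hv, hx⟩ := (hprec x x).mp hx
    apply hv
    apply hker
    funext i
    have h := congrFun hx i
    simp only [Pi.add_apply] at h
    simpa using h.symm
  have htr : ∀ x y z, prec x y → prec y z → prec x z := by
    intro x y z hxy hyz
    obtain ⟨u, hu, hxy⟩ := (hprec x y).mp hxy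
    obtain ⟨v, hv, hyz⟩ := (hprec y z).mp hyz
    refine (hprec x z).mpr ⟨u + v, ?_, ?_⟩
    · intro h
      apply hu
      funext j
      have := congrFun h j
      simpa using (Nat.add_eq_zero.mp this).1
    · rw [hxy, hyz]
      have : (fun j => ((u + v) j : ℤ)) = (fun j => (u j : ℤ)) + (fun j => (v j : ℤ)) := by
        funext j; push_cast; simp
      rw [this, Matrix.mulVec_add]
      abel
  -- evaluation of the sum at a point
  have heval : ∀ x, Z.coeff x = ∑ η ∈ a.support, a η * ((L η).coeff x) := by
    intro x
    rw [hsum, AddMonoidAlgebra.coeff_finsuppSum, Finsupp.sum_apply]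
    exact Finset.sum_congr rfl fun η _ => rfl
  -- part 2
  have part2 : ∀ η, η ≠ g → ¬ prec η g → a η = 0 := by
    intro η₀ hne hnprec
    by_contra hne0
    set S : Finset (Fin m → ℤ) := a.support.filter (fun η => ¬(η = g ∨ prec η g)) with hS
    have hSne : S.Nonempty := ⟨η₀, by
      simp only [hS, Finset.mem_filter, Finsupp.mem_support_iff]
      exact ⟨hne0, by tauto⟩⟩
    obtain ⟨x, hxS, hxmax⟩ := stmt7_exists_max prec htr hirr S hSne
    have hxS' := Finset.mem_filter.mp hxS
    have hxsupp : x ∈ a.support := hxS'.1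
    have hxng : ¬(x = g ∨ prec x g) := hxS'.2
    have hZx : Z.coeff x = a x := by
      rw [heval x]
      rw [Finset.sum_eq_single x]
      · rw [(hL x).1, mul_one]
      · intro η hη hηx
        by_cases hLx : (L η).coeff x = 0
        · rw [hLx, mul_zero]
        · exfalso
          have hmem : x ∈ (L η).coeff.support := Finsupp.mem_support_iff.mpr hLx
          rcases (hL η).2 x hmem with rfl | hpx
          · exact hηx rfl
          · -- prec x η
            have hηS : η ∈ S := by
              rw [hS, Finset.mem_filter]
              refine ⟨hη, ?_⟩
              rintro (rfl | hηg)
              · exact hxng (Or.inr hpx)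
              · exact hxng (Or.inr (htr _ _ _ hpx hηg))
            exact hxmax η hηS hpx
      · intro h
        exact absurd h (by simpa using hxsupp)
    have : x ∈ Z.coeff.support := by
      rw [Finsupp.mem_support_iff, hZx]
      simpa using hxsupp
    exact hxng (hZ.2 x this)
  refine ⟨?_, part2⟩
  have h1 : Z.coeff g = a g := by
    rw [heval g]
    rw [Finset.sum_eq_single g]
    · rw [(hL g).1, mul_one]
    · intro η hη hηg
      have haη : a η ≠ 0 := Finsupp.mem_support_iff.mp hη
      have hpg : prec η g := by
        by_contra hc
        exact haη (part2 η hηg hc)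
      by_cases hLg : (L η).coeff g = 0
      · rw [hLg, mul_zero]
      · exfalso
        have hmem : g ∈ (L η).coeff.support := Finsupp.mem_support_iff.mpr hLg
        rcases (hL η).2 g hmem with rfl | hpx
        · exact hηg rfl
        · exact hirr g (htr _ _ _ hpx hpg)
    · intro h
      rw [Finsupp.notMem_support_iff.mp h, zero_mul]
  rw [← h1, hZ.1]
end

section
/- Let (Λ, B̃) be a compatible pair (Λ skew-symmetric m×m integer matrix, B̃ m×n integer matrix, Λ(−B̃) = (D; 0) with D = diag(d_1,…,d_n), d_k > 0) and suppose the principal part of B̃ satisfies b_{kk} = 0. Then the mutated quantization matrix is independent of the sign: E_+^T Λ E_+ = E_−^T Λ E_−, where E_± are the Berenstein–Zelevinsky mutation matrices in direction k. -/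
/-- The Berenstein–Zelevinsky mutation matrix `E_ε` in direction `k`. -/
def Emat (m n : ℕ) (hmn : n ≤ m) (B : Matrix (Fin m) (Fin n) ℤ) (k : Fin n)
    (ε : ℤ) : Matrix (Fin m) (Fin m) ℤ := fun i j =>
  if j = Fin.castLE hmn k then
    (if i = Fin.castLE hmn k then -1 else max 0 (-(ε * B i k)))
  else if i = j then 1 else 0

/-- For a compatible pair `(Λ, B̃)` with `b_{kk} = 0`, the mutated
quantization matrix is independent of the sign:
`E₊ᵀ Λ E₊ = E₋ᵀ Λ E₋`. -/
theorem stmt_13 (m n : ℕ) (hmn : n ≤ m)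
    (Λ : Matrix (Fin m) (Fin m) ℤ) (B : Matrix (Fin m) (Fin n) ℤ)
    (hskew : Λ.transpose = -Λ)
    (d : Fin n → ℤ) (hd : ∀ k, 0 < d k)
    (hcomp : ∀ (i : Fin m) (k : Fin n),
      (Λ * B) i k = if i = Fin.castLE hmn k then -(d k) else 0)
    (k : Fin n) (hBkk : B (Fin.castLE hmn k) k = 0) :
    (Emat m n hmn B k 1).transpose * Λ * Emat m n hmn B k 1
      = (Emat m n hmn B k (-1)).transpose * Λ * Emat m n hmn B k (-1) := by
  set K : Fin m := Fin.castLE hmn k with hK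
  set M : Matrix (Fin m) (Fin m) ℤ := fun i j => if j = K then -B i k else 0 with hM
  set N : Matrix (Fin m) (Fin m) ℤ :=
    fun p q => if p = K ∧ q = K then d k else 0 with hN
  replace hM : ∀ i j, M i j = (if j = K then -B i k else 0) := fun _ _ => rfl
  replace hN : ∀ p q, N p q = (if p = K ∧ q = K then d k else 0) := fun _ _ => rfl
  set E : Matrix (Fin m) (Fin m) ℤ := Emat m n hmn B k (-1) with hEm
  have hskew' : ∀ i j, Λ i j = - Λ j i := by
    intro i j
    have := congrFun (congrFun hskew j) i
    simpa [Matrix.transpose_apply] using this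
  have hE : Emat m n hmn B k 1 = E + M := by
    ext i j
    simp only [hEm, Emat, Matrix.add_apply, hM]
    by_cases hj : j = K
    · subst hj
      by_cases hi : i = K
      · simp [hi, hBkk]
      · simp only [← hK, if_pos rfl, hi, if_neg hi, ite_true, eq_self_iff_true,
          one_mul, neg_mul, neg_neg]
        simp only [if_false]
        omega
    · simp [hj, ← hK]
  have hLM : Λ * M = N := by
    ext p q
    by_cases hq : q = K
    · have h1 : (Λ * M) p q = - ((Λ * B) p k) := by
        simp [Matrix.mul_apply, hM, hq, mul_neg, ← Finset.sum_neg_distrib]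
      rw [h1, hcomp p k, hN]
      by_cases hp : p = K <;> simp [hp, hq, ← hK]
    · simp [Matrix.mul_apply, hM, hq, hN]
  have hML : M.transpose * Λ = -N := by
    ext p q
    by_cases hp : p = K
    · have h1 : (M.transpose * Λ) p q = (Λ * B) q k := by
        simp only [Matrix.mul_apply, Matrix.transpose_apply, hM, hp, ite_true,
          eq_self_iff_true]
        exact Finset.sum_congr rfl fun j _ => by rw [hskew' j q]; ring
      rw [h1, hcomp q k, Matrix.neg_apply, hN]
      by_cases hq : q = K <;> simp [hp, hq, ← hK]
    · simp [Matrix.mul_apply, hM, hp, hN]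
  have hEK : ∀ p, E K p = if p = K then -1 else 0 := by
    intro p
    by_cases hp : p = K
    · simp [hEm, Emat, hp, hK]
    · simp [hEm, Emat, hp, hK, Ne.symm hp, eq_comm, show ¬ p = Fin.castLE hmn k from hp]
  have hENl : E.transpose * N = -N := by
    ext p q
    by_cases hq : q = K
    · have : (E.transpose * N) p q = E K p * d k := by
        simp [Matrix.mul_apply, hN, hq, mul_ite, Finset.sum_ite_eq]
      rw [this, hEK p, Matrix.neg_apply, hN]
      by_cases hp : p = K <;> simp [hp, hq]
    · simp [Matrix.mul_apply, hN, hq]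
  have hENr : N * E = -N := by
    ext p q
    by_cases hp : p = K
    · have : (N * E) p q = d k * E K q := by
        simp [Matrix.mul_apply, hN, hp, ite_mul, Finset.sum_ite_eq']
      rw [this, hEK q, Matrix.neg_apply, hN]
      by_cases hq : q = K <;> simp [hp, hq]
    · simp [Matrix.mul_apply, hN, hp]
  have hNM : N * M = 0 := by
    ext p q
    by_cases hq : q = K
    · by_cases hp : p = K
      · simp [Matrix.mul_apply, hN, hM, hq, hp, ite_and, Finset.sum_ite_eq', hBkk]
      · simp [Matrix.mul_apply, hN, hM, hq, hp, ite_and]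
    · simp [Matrix.mul_apply, hN, hM, hq]
  rw [hE, Matrix.transpose_add, Matrix.add_mul, Matrix.add_mul, Matrix.mul_add,
    Matrix.mul_add]
  rw [Matrix.mul_assoc E.transpose Λ M, hLM, hML, hENl]
  rw [Matrix.neg_mul, hENr, Matrix.neg_mul, hNM]
  simp [Matrix.mul_assoc]
end

section
/- Mutation preserves compatibility: let (Λ, B̃) be a compatible pair with Λ(−B̃) = (D; 0), D = diag(d_1,…,d_n) positive, and assume DB is skew-symmetric where B is the principal (top n×n) part of B̃ (in particular b_{kk} = 0). Fix 1 ≤ k ≤ n and a sign ε, and set Λ' = E_ε^T Λ E_ε and B̃' = E_ε B̃ F_ε. Then Λ' is skew-symmetric and Λ'·(−B̃') = (D; 0), i.e. (Λ', B̃') is again a compatible pair with the same diagonal matrix D. -/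
/-- The Berenstein–Zelevinsky mutation matrix `F_ε` in direction `k`. -/
def Fmat (m n : ℕ) (hmn : n ≤ m) (B : Matrix (Fin m) (Fin n) ℤ) (k : Fin n)
    (ε : ℤ) : Matrix (Fin n) (Fin n) ℤ := fun i j =>
  if i = k then
    (if j = k then -1 else max 0 (ε * B (Fin.castLE hmn k) j))
  else if i = j then 1 else 0

private lemma sum_pair_aux {ι : Type*} [Fintype ι] [DecidableEq ι] {M : Type*}
    [AddCommMonoid M] (f : ι → M) (a b : ι) (hab : a ≠ b)
    (h : ∀ c, c ≠ a → c ≠ b → f c = 0) :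
    ∑ x, f x = f a + f b := by
  rw [← Finset.sum_pair hab]
  exact (Finset.sum_subset (Finset.subset_univ _) (fun x _ hx => by
    simp only [Finset.mem_insert, Finset.mem_singleton, not_or] at hx
    exact h x hx.1 hx.2)).symm

private lemma Emat_sq (m n : ℕ) (hmn : n ≤ m) (B : Matrix (Fin m) (Fin n) ℤ)
    (k : Fin n) (ε : ℤ) :
    Emat m n hmn B k ε * Emat m n hmn B k ε = 1 := by
  ext i j
  rw [Matrix.mul_apply, Matrix.one_apply]
  by_cases hj : j = Fin.castLE hmn k
  · subst hj
    by_cases hi : i = Fin.castLE hmn k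
    · subst hi
      rw [Finset.sum_eq_single (Fin.castLE hmn k)]
      · simp [Emat]
      · intro p _ hp; simp [Emat, hp, Ne.symm hp]
      · simp
    · rw [sum_pair_aux _ i (Fin.castLE hmn k) hi]
      · simp [Emat, hi]
      · intro c hc1 hc2
        simp [Emat, hc2, Ne.symm hc1, hi]
  · rw [Finset.sum_eq_single j]
    · simp [Emat, hj]
    · intro p _ hp; simp [Emat, hj, hp]
    · simp

/-- Mutation preserves compatibility: `(Λ', B̃') = (E_εᵀ Λ E_ε, E_ε B̃ F_ε)`
is again a compatible pair, with the same positive diagonal matrix `D`. -/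
theorem stmt_14 (m n : ℕ) (hmn : n ≤ m)
    (Λ : Matrix (Fin m) (Fin m) ℤ) (B : Matrix (Fin m) (Fin n) ℤ)
    (hskew : Λ.transpose = -Λ)
    (d : Fin n → ℤ) (hd : ∀ k, 0 < d k)
    (hcomp : ∀ (i : Fin m) (k : Fin n),
      (Λ * B) i k = if i = Fin.castLE hmn k then -(d k) else 0)
    (hss : ∀ i j : Fin n,
      d i * B (Fin.castLE hmn i) j = -(d j * B (Fin.castLE hmn j) i))
    (k : Fin n) (ε : ℤ) (hε : ε = 1 ∨ ε = -1) :
    ((Emat m n hmn B k ε).transpose * Λ * Emat m n hmn B k ε).transpose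
      = -((Emat m n hmn B k ε).transpose * Λ * Emat m n hmn B k ε) ∧
    (∀ (i : Fin m) (k' : Fin n),
      (((Emat m n hmn B k ε).transpose * Λ * Emat m n hmn B k ε)
        * (Emat m n hmn B k ε * B * Fmat m n hmn B k ε)) i k'
        = if i = Fin.castLE hmn k' then -(d k') else 0) := by
  set E := Emat m n hmn B k ε with hE
  set F := Fmat m n hmn B k ε with hF
  constructor
  · rw [Matrix.transpose_mul, Matrix.transpose_mul, Matrix.transpose_transpose, hskew,
      Matrix.mul_assoc, Matrix.neg_mul, Matrix.mul_neg]
  · intro i j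
    have hred : E.transpose * Λ * E * (E * B * F) = E.transpose * (Λ * B) * F := by
      have : E.transpose * Λ * E * (E * B * F)
          = E.transpose * Λ * ((E * E) * (B * F)) := by
        simp only [Matrix.mul_assoc]
      rw [this, Emat_sq, Matrix.one_mul]
      simp only [Matrix.mul_assoc]
    rw [hred]
    have hN : ∀ (i : Fin m) (q : Fin n),
        (E.transpose * (Λ * B)) i q = E (Fin.castLE hmn q) i * (-(d q)) := by
      intro i q
      rw [Matrix.mul_apply]
      rw [Finset.sum_eq_single (Fin.castLE hmn q)]
      · rw [Matrix.transpose_apply, hcomp]; simp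
      · intro p _ hp; rw [hcomp]; simp [hp]
      · simp
    rw [Matrix.mul_assoc, ← Matrix.mul_assoc E.transpose, Matrix.mul_apply]
    simp only [hN]
    by_cases hjk : j = k
    · rw [hjk]
      rw [Finset.sum_eq_single k]
      · by_cases hi : i = Fin.castLE hmn k
        · simp [hE, hF, Emat, Fmat, hi]
        · simp [hE, hF, Emat, Fmat, hi, Ne.symm hi]
      · intro q _ hq
        have : F q k = 0 := by simp [hF, Fmat, hq]
        rw [this, mul_zero]
      · simp
    · have hjk' : Fin.castLE hmn j ≠ Fin.castLE hmn k := by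
        simp [Fin.castLE_inj, hjk]
      rw [sum_pair_aux _ j k hjk]
      · by_cases hi : i = Fin.castLE hmn k
        · subst hi
          have key : d j * max 0 (-(ε * B (Fin.castLE hmn j) k))
              = d k * max 0 (ε * B (Fin.castLE hmn k) j) := by
            rw [mul_max_of_nonneg _ _ (hd j).le, mul_max_of_nonneg _ _ (hd k).le,
              mul_zero, mul_zero]
            congr 1
            linear_combination (-ε) * hss j k
          simp only [hE, hF, Emat, Fmat, if_pos rfl, if_neg hjk, if_neg hjk',
            if_neg (Ne.symm hjk'), eq_self_iff_true, if_true, mul_neg, mul_one,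
            neg_neg, neg_mul, one_mul]
          linear_combination (-1 : ℤ) * key
        · have hEk : E (Fin.castLE hmn k) i = 0 := by
            simp [hE, Emat, hi, Ne.symm hi]
          rw [hEk, zero_mul, zero_mul, add_zero]
          have hFj : F j j = 1 := by simp [hF, Fmat, hjk]
          rw [hFj, mul_one]
          by_cases h2 : i = Fin.castLE hmn j
          · simp [hE, Emat, h2, hi, hjk', Ne.symm hjk']
          · simp [hE, Emat, h2, hi, Ne.symm h2]
      · intro q hq1 hq2
        have : F q j = 0 := by simp [hF, Fmat, hq1, hq2]
        rw [this, mul_zero]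
end

section
/- Let R be an associative algebra over ℤ[t^{±1/2}] which is free as a module with basis {S_w : w ∈ W}, such that all structure constants lie in ℕ[t^{±1/2}] (i.e. S_{w'} · S_{w''} = Σ_w a^w_{w',w''} S_w with a^w_{w',w''} ∈ ℕ[t^{±1/2}]) and such that the product of any two basis elements is nonzero. Suppose Z = Σ_{i} a_i S_{w_i} is a finite sum with all a_i ∈ ℕ[t^{±1/2}] nonzero, and suppose there exist u, u' ∈ W and α ∈ (1/2)ℤ with Z · S_u = t^α S_{u'}. Then the sum has a single term: Z = t^β S_{w_0} for some w_0 ∈ W and β ∈ (1/2)ℤ. -/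
open Finsupp

/-- A product of two Laurent polynomials with nonnegative coefficients has
nonnegative coefficients. -/
lemma aux18_mul_nonneg (p q : AddMonoidAlgebra ℤ ℤ)
    (hp : ∀ x, 0 ≤ p.coeff x) (hq : ∀ x, 0 ≤ q.coeff x) (x : ℤ) : 0 ≤ (p * q).coeff x := by
  classical
  rw [AddMonoidAlgebra.coeff_mul]
  apply Finset.sum_nonneg
  intro a _
  apply Finset.sum_nonneg
  intro b _
  show 0 ≤ if a + b = x then p.coeff a * q.coeff b else 0
  split
  · exact mul_nonneg (hp a) (hq b)
  · exact le_refl 0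

/-- If a nonnegative Laurent polynomial divides a monomial with coefficient 1,
it is a monomial with coefficient 1. -/
lemma aux18_factor (p q : AddMonoidAlgebra ℤ ℤ) (hp0 : p ≠ 0) (hq0 : q ≠ 0)
    (hp : ∀ x, 0 ≤ p.coeff x) (α : ℤ) (h : p * q = AddMonoidAlgebra.single α 1) :
    ∃ β : ℤ, p = AddMonoidAlgebra.single β 1 := by
  classical
  have hA : p.coeff.support.Nonempty := Finsupp.support_nonempty_iff.mpr (AddMonoidAlgebra.coeff_eq_zero.not.mpr hp0)
  have hB : q.coeff.support.Nonempty := Finsupp.support_nonempty_iff.mpr (AddMonoidAlgebra.coeff_eq_zero.not.mpr hq0)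
  set a1 := p.coeff.support.max' hA with ha1
  set b1 := q.coeff.support.max' hB with hb1
  set a0 := p.coeff.support.min' hA with ha0
  set b0 := q.coeff.support.min' hB with hb0
  have hmax : (p * q).coeff (a1 + b1) = p.coeff a1 * q.coeff b1 :=
    AddMonoidAlgebra.coeff_mul_add_of_uniqueAdd (by
      intro a b ha hb hab
      have h1 := p.coeff.support.le_max' a ha
      have h2 := q.coeff.support.le_max' b hb
      constructor <;> omega)
  have hmin : (p * q).coeff (a0 + b0) = p.coeff a0 * q.coeff b0 :=
    AddMonoidAlgebra.coeff_mul_add_of_uniqueAdd (by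
      intro a b ha hb hab
      have h1 := p.coeff.support.min'_le a ha
      have h2 := q.coeff.support.min'_le b hb
      constructor <;> omega)
  have hpa1 : p.coeff a1 ≠ 0 := Finsupp.mem_support_iff.mp (p.coeff.support.max'_mem hA)
  have hqb1 : q.coeff b1 ≠ 0 := Finsupp.mem_support_iff.mp (q.coeff.support.max'_mem hB)
  have hpa0 : p.coeff a0 ≠ 0 := Finsupp.mem_support_iff.mp (p.coeff.support.min'_mem hA)
  have hqb0 : q.coeff b0 ≠ 0 := Finsupp.mem_support_iff.mp (q.coeff.support.min'_mem hB)
  -- only the coefficient at α of p*q is nonzero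
  have hsupp : ∀ x : ℤ, (p * q).coeff x ≠ 0 → x = α := by
    intro x hx
    rw [h, AddMonoidAlgebra.coeff_single, Finsupp.single_apply] at hx
    by_contra hne
    exact hx (if_neg (fun hc => hne hc.symm))
  have h1 : a1 + b1 = α := hsupp _ (by rw [hmax]; exact mul_ne_zero hpa1 hqb1)
  have h0 : a0 + b0 = α := hsupp _ (by rw [hmin]; exact mul_ne_zero hpa0 hqb0)
  have hle1 : a0 ≤ a1 := p.coeff.support.min'_le _ (p.coeff.support.max'_mem hA)
  have hle2 : b0 ≤ b1 := q.coeff.support.min'_le _ (q.coeff.support.max'_mem hB)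
  have haa : a0 = a1 := by omega
  have hsub : p.coeff.support ⊆ {a1} := by
    intro a ha
    have h1 := p.coeff.support.le_max' a ha
    have h2 := p.coeff.support.min'_le a ha
    simp only [Finset.mem_singleton]
    omega
  have hps : p = AddMonoidAlgebra.single a1 (p.coeff a1) :=
    AddMonoidAlgebra.ext (Finsupp.support_subset_singleton.mp hsub)
  -- the leading coefficient is 1
  have hval : p.coeff a1 * q.coeff b1 = 1 := by
    rw [← hmax, h1, h, AddMonoidAlgebra.coeff_single, Finsupp.single_apply, if_pos rfl]
  have hunit : IsUnit (p.coeff a1) := IsUnit.of_mul_eq_one _ hval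
  have hone : p.coeff a1 = 1 := by
    rcases Int.isUnit_iff.mp hunit with h' | h'
    · exact h'
    · exfalso; have := hp a1; omega
  exact ⟨a1, by rw [hps, hone]⟩

/-- If an element `Z` with nonnegative coordinates in a positive basis
`{S_w}` (structure constants in `ℕ[t^{±1/2}]`, products of basis elements
nonzero) satisfies `Z * S_u = t^α S_{u'}`, then `Z` is a single term
`t^β S_{w₀}`.  The ring `ℤ[t^{±1/2}]` is modelled as `AddMonoidAlgebra ℤ ℤ`
(the exponent `x` standing for `t^{x/2}`), so `t^α` is `single α 1`. -/
theorem stmt_18 (W : Type*) (R : Type*) [Ring R]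
    [Algebra (AddMonoidAlgebra ℤ ℤ) R]
    (bS : Module.Basis W (AddMonoidAlgebra ℤ ℤ) R)
    (hstr : ∀ (w' w'' w : W) (x : ℤ),
      0 ≤ ((bS.repr (bS w' * bS w'')) w).coeff x)
    (hnz : ∀ w' w'' : W, bS w' * bS w'' ≠ 0)
    (Z : R) (hZpos : ∀ (w : W) (x : ℤ), 0 ≤ ((bS.repr Z) w).coeff x)
    (u u' : W) (α : ℤ)
    (hZ : Z * bS u = (AddMonoidAlgebra.single α 1 : AddMonoidAlgebra ℤ ℤ) • bS u') :
    ∃ (w₀ : W) (β : ℤ),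
      Z = (AddMonoidAlgebra.single β 1 : AddMonoidAlgebra ℤ ℤ) • bS w₀ := by
  classical
  set F : W →₀ AddMonoidAlgebra ℤ ℤ := bS.repr Z with hFdef
  set G : W → (W →₀ AddMonoidAlgebra ℤ ℤ) := fun w => bS.repr (bS w * bS u) with hGdef
  -- Z as a combination of basis vectors
  have hZrepr : Z = ∑ w ∈ F.support, F w • bS w := by
    conv_lhs => rw [← bS.linearCombination_repr Z]
    rw [Finsupp.linearCombination_apply, Finsupp.sum]
  -- key equation among coordinates
  have hkey : ∀ v : W, (∑ w ∈ F.support, F w * G w v)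
      = (Finsupp.single u' (AddMonoidAlgebra.single α 1) : W →₀ AddMonoidAlgebra ℤ ℤ) v := by
    intro v
    have e1 : bS.repr (Z * bS u)
        = ∑ w ∈ F.support, F w • G w := by
      conv_lhs => rw [hZrepr, Finset.sum_mul]
      rw [map_sum]
      exact Finset.sum_congr rfl (fun w _ => by rw [smul_mul_assoc, map_smul])
    have e2 : bS.repr (Z * bS u)
        = Finsupp.single u' (AddMonoidAlgebra.single α 1) := by
      rw [hZ, map_smul, bS.repr_self, Finsupp.smul_single, smul_eq_mul, mul_one]
    rw [e2] at e1
    calc (∑ w ∈ F.support, F w * G w v)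
        = (∑ w ∈ F.support, F w • G w) v := by
          rw [Finset.sum_apply']
          exact (Finset.sum_congr rfl fun w _ => by
            rw [Finsupp.smul_apply, smul_eq_mul]).symm
      _ = _ := by rw [← e1]
  -- each coefficient of each summand is nonnegative
  have hnn : ∀ w v (x : ℤ), 0 ≤ (F w * G w v).coeff x := fun w v x =>
    aux18_mul_nonneg _ _ (fun y => hZpos w y) (fun y => hstr w u v y) x
  -- each summand is bounded by the total
  have hle : ∀ w ∈ F.support, ∀ v (x : ℤ), (F w * G w v).coeff x
      ≤ ((Finsupp.single u' (AddMonoidAlgebra.single α 1) : W →₀ AddMonoidAlgebra ℤ ℤ) v).coeff x := by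
    intro w hw v x
    calc (F w * G w v).coeff x ≤ ∑ w' ∈ F.support, (F w' * G w' v).coeff x :=
          Finset.single_le_sum (fun w' _ => hnn w' v x) hw
      _ = (∑ w' ∈ F.support, F w' * G w' v).coeff x := by
          rw [AddMonoidAlgebra.coeff_sum, Finsupp.finset_sum_apply]
      _ = _ := by rw [hkey]
  -- facts about elements of the support
  have hFne : ∀ w ∈ F.support, F w ≠ 0 := fun w hw => Finsupp.mem_support_iff.mp hw
  have hGne : ∀ w : W, G w ≠ 0 := by
    intro w hG0
    exact hnz w u (bS.repr.map_eq_zero_iff.mp hG0)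
  -- for w in the support, F w * G w u' is a positive multiple of t^α :
  -- first, it vanishes away from (u', α)
  have hvanish : ∀ w ∈ F.support, ∀ v, v ≠ u' → F w * G w v = 0 := by
    intro w hw v hv
    ext x
    have h1 := hle w hw v x
    have h2 := hnn w v x
    rw [Finsupp.single_apply, if_neg (fun hc => hv hc.symm), AddMonoidAlgebra.coeff_zero, Finsupp.zero_apply] at h1
    simp only [AddMonoidAlgebra.coeff_zero, Finsupp.coe_zero, Pi.zero_apply]
    omega
  have hGu' : ∀ w ∈ F.support, G w u' ≠ 0 := by
    intro w hw hG0
    apply hGne w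
    ext v
    by_cases hv : v = u'
    · rw [hv, hG0]; rfl
    · have := hvanish w hw v hv
      rcases mul_eq_zero.mp this with h' | h'
      · exact absurd h' (hFne w hw)
      · rw [h']; rfl
  have hxvanish : ∀ w ∈ F.support, ∀ x : ℤ, x ≠ α → (F w * G w u').coeff x = 0 := by
    intro w hw x hx
    have h1 := hle w hw u' x
    have h2 := hnn w u' x
    rw [Finsupp.single_apply, if_pos rfl, AddMonoidAlgebra.coeff_single, Finsupp.single_apply,
      if_neg (fun hc => hx hc.symm)] at h1
    omega
  have hpos : ∀ w ∈ F.support, 1 ≤ (F w * G w u').coeff α := by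
    intro w hw
    have hne : F w * G w u' ≠ 0 := mul_ne_zero (hFne w hw) (hGu' w hw)
    have : (F w * G w u').coeff α ≠ 0 := by
      intro h0
      apply hne
      ext x
      by_cases hx : x = α
      · rw [hx, h0]; rfl
      · rw [hxvanish w hw x hx]; rfl
    have h2 := hnn w u' α
    omega
  -- the total at (u', α) is 1
  have htot : (∑ w ∈ F.support, (F w * G w u').coeff α) = 1 := by
    rw [← Finsupp.finset_sum_apply, ← AddMonoidAlgebra.coeff_sum, hkey u', Finsupp.single_apply, if_pos rfl,
      AddMonoidAlgebra.coeff_single, Finsupp.single_apply, if_pos rfl]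
  -- Z is nonzero, so the support is nonempty
  have hZ0 : Z ≠ 0 := by
    intro h0
    rw [h0, zero_mul] at hZ
    have := congrArg bS.repr hZ
    rw [map_zero, map_smul, bS.repr_self, Finsupp.smul_single, smul_eq_mul, mul_one] at this
    have := congrArg (fun p => (p u').coeff α) this
    simp [Finsupp.single_apply, AddMonoidAlgebra.coeff_single] at this
  have hFsupp : F.support.Nonempty := by
    rw [Finsupp.support_nonempty_iff]
    intro h0
    exact hZ0 (bS.repr.map_eq_zero_iff.mp h0)
  -- support has exactly one element
  have hcard : F.support.card = 1 := by
    have hge : (F.support.card : ℤ) ≤ ∑ w ∈ F.support, (F w * G w u').coeff α := by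
      calc (F.support.card : ℤ) = ∑ _w ∈ F.support, (1 : ℤ) := by
            rw [Finset.sum_const, nsmul_eq_mul, mul_one]
        _ ≤ _ := Finset.sum_le_sum (fun w hw => hpos w hw)
    rw [htot] at hge
    have h1 : 1 ≤ F.support.card := Finset.card_pos.mpr hFsupp
    omega
  obtain ⟨w₀, hw₀⟩ := Finset.card_eq_one.mp hcard
  have hw₀mem : w₀ ∈ F.support := by rw [hw₀]; exact Finset.mem_singleton_self w₀
  -- the single term equals the monomial
  have hmono : F w₀ * G w₀ u' = AddMonoidAlgebra.single α 1 := by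
    ext x
    by_cases hx : x = α
    · subst hx
      have := htot
      rw [hw₀, Finset.sum_singleton] at this
      rw [this, AddMonoidAlgebra.coeff_single, Finsupp.single_apply, if_pos rfl]
    · rw [hxvanish w₀ hw₀mem x hx, AddMonoidAlgebra.coeff_single, Finsupp.single_apply,
        if_neg (fun hc => hx hc.symm)]
  obtain ⟨β, hβ⟩ := aux18_factor (F w₀) (G w₀ u') (hFne w₀ hw₀mem) (hGu' w₀ hw₀mem)
    (fun x => hZpos w₀ x) α hmono
  refine ⟨w₀, β, ?_⟩
  rw [hZrepr, hw₀, Finset.sum_singleton, hβ]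
end
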